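/- Let Γ ⊆ ℝ^p be nonempty closed convex, P ≻ 0, and suppose η_k ∈ Γ and e_k ∈ ℝ^p with ‖e_k − F(η_k)‖_P ≤ Lₕ‖ξ_k‖ for some ξ_k ∈ ℝ^n and constant Lₕ > 0. Let η̄ be the fixed point of the damped forward-backward operator Φ_d with contraction constant c_dfb ∈ (0,1), and define η_{k+1} = (1−λ)η_k + λ Proj_Γ^P(η_k − αe_k). Then ‖η_{k+1} − η̄‖_P ≤ c_dfb‖η_k − η̄‖_P + λα Lₕ‖ξ_k‖. -/

import Mathlib

open Matrix

noncomputable def pInner {p : ℕ} (P : Matrix (Fin p) (Fin p) ℝ) (x y : Fin p → ℝ) : ℝ :=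
  x ⬝ᵥ P.mulVec y

noncomputable def pNorm {p : ℕ} (P : Matrix (Fin p) (Fin p) ℝ) (x : Fin p → ℝ) : ℝ :=
  Real.sqrt (pInner P x x)

/-- `Pr` is the metric projection onto `Γ` in the norm induced by `P`. -/
def IsMetricProj {p : ℕ} (P : Matrix (Fin p) (Fin p) ℝ) (Γ : Set (Fin p → ℝ))
    (Pr : (Fin p → ℝ) → (Fin p → ℝ)) : Prop :=
  ∀ x, Pr x ∈ Γ ∧ ∀ ν ∈ Γ, pNorm P (x - Pr x) ≤ pNorm P (x - ν)

variable {p : ℕ} {P : Matrix (Fin p) (Fin p) ℝ}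

lemma pInner_add_left (x y z : Fin p → ℝ) : pInner P (x + y) z = pInner P x z + pInner P y z := by
  simp [pInner, add_dotProduct]

lemma pInner_add_right (x y z : Fin p → ℝ) : pInner P x (y + z) = pInner P x y + pInner P x z := by
  simp [pInner, mulVec_add, dotProduct_add]

lemma pInner_smul_left (c : ℝ) (x y : Fin p → ℝ) : pInner P (c • x) y = c * pInner P x y := by
  simp [pInner, smul_dotProduct]

lemma pInner_smul_right (c : ℝ) (x y : Fin p → ℝ) : pInner P x (c • y) = c * pInner P x y := by
  simp [pInner, mulVec_smul, dotProduct_smul]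

lemma pInner_sub_left (x y z : Fin p → ℝ) : pInner P (x - y) z = pInner P x z - pInner P y z := by
  simp [pInner, sub_dotProduct]

lemma pInner_sub_right (x y z : Fin p → ℝ) : pInner P x (y - z) = pInner P x y - pInner P x z := by
  simp [pInner, mulVec_sub, dotProduct_sub]

lemma pInner_comm (hP : P.PosDef) (x y : Fin p → ℝ) : pInner P x y = pInner P y x := by
  have hsym : Pᵀ = P := by
    have := hP.isHermitian
    rwa [Matrix.IsHermitian, conjTranspose_eq_transpose_of_trivial] at this
  calc pInner P x y = (x ᵥ* P) ⬝ᵥ y := by rw [pInner, dotProduct_mulVec]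
    _ = (Pᵀ *ᵥ x) ⬝ᵥ y := by rw [mulVec_transpose]
    _ = (P *ᵥ x) ⬝ᵥ y := by rw [hsym]
    _ = pInner P y x := by rw [pInner, dotProduct_comm]

lemma pInner_self_nonneg (hP : P.PosDef) (x : Fin p → ℝ) : 0 ≤ pInner P x x := by
  simpa [pInner] using hP.posSemidef.dotProduct_mulVec_nonneg x

lemma pNorm_nonneg (x : Fin p → ℝ) : 0 ≤ pNorm P x := Real.sqrt_nonneg _

lemma pNorm_sq (hP : P.PosDef) (x : Fin p → ℝ) : pNorm P x ^ 2 = pInner P x x := by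
  rw [pNorm, Real.sq_sqrt (pInner_self_nonneg hP x)]

lemma pInner_cs (hP : P.PosDef) (x y : Fin p → ℝ) :
    pInner P x y ≤ pNorm P x * pNorm P y := by
  rcases eq_or_ne y 0 with rfl | hy
  · simp [pInner, pNorm]
  · have hd : 0 < pInner P y y := by simpa [pInner] using hP.dotProduct_mulVec_pos hy
    set c := pInner P x y / pInner P y y with hc
    have h0 : 0 ≤ pInner P (x - c • y) (x - c • y) := pInner_self_nonneg hP _
    have hexp : pInner P (x - c • y) (x - c • y)
        = pInner P x x - 2 * c * pInner P x y + c ^ 2 * pInner P y y := by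
      rw [pInner_sub_left, pInner_sub_right, pInner_sub_right, pInner_smul_left,
        pInner_smul_right, pInner_smul_left, pInner_smul_right, pInner_comm hP y x]
      ring
    have key : pInner P x y ^ 2 ≤ pInner P x x * pInner P y y := by
      rw [hexp, hc] at h0
      have hne : pInner P y y ≠ 0 := hd.ne'
      have heq : pInner P x x - 2 * (pInner P x y / pInner P y y) * pInner P x y +
          (pInner P x y / pInner P y y) ^ 2 * pInner P y y
          = pInner P x x - pInner P x y ^ 2 / pInner P y y := by
        field_simp; ring
      rw [heq] at h0
      have := (div_le_iff₀ hd).mp (by linarith : pInner P x y ^ 2 / pInner P y y ≤ pInner P x x)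
      linarith [this]
    have h1 : pInner P x y ≤ |pInner P x y| := le_abs_self _
    have h2 : |pInner P x y| ≤ pNorm P x * pNorm P y := by
      have : |pInner P x y| ^ 2 ≤ (pNorm P x * pNorm P y) ^ 2 := by
        rw [sq_abs, mul_pow, pNorm_sq hP, pNorm_sq hP]; exact key
      nlinarith [abs_nonneg (pInner P x y), mul_nonneg (pNorm_nonneg (P := P) x) (pNorm_nonneg (P := P) y), this]
    linarith

lemma pNorm_triangle (hP : P.PosDef) (x y : Fin p → ℝ) :
    pNorm P (x + y) ≤ pNorm P x + pNorm P y := by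
  have h : pNorm P (x + y) ^ 2 ≤ (pNorm P x + pNorm P y) ^ 2 := by
    rw [pNorm_sq hP, pInner_add_left, pInner_add_right, pInner_add_right,
      pInner_comm hP y x]
    have := pInner_cs hP x y
    nlinarith [pNorm_sq hP x, pNorm_sq hP y]
  nlinarith [pNorm_nonneg (P := P) (x + y), pNorm_nonneg (P := P) x, pNorm_nonneg (P := P) y]

lemma pNorm_smul (hP : P.PosDef) (c : ℝ) (x : Fin p → ℝ) :
    pNorm P (c • x) = |c| * pNorm P x := by
  rw [pNorm, pNorm, pInner_smul_left, pInner_smul_right, ← mul_assoc]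
  rw [show c * c = |c| ^ 2 by rw [sq_abs]; ring]
  rw [Real.sqrt_mul (sq_nonneg _), Real.sqrt_sq (abs_nonneg c)]

lemma pNorm_sub_comm (hP : P.PosDef) (x y : Fin p → ℝ) :
    pNorm P (x - y) = pNorm P (y - x) := by
  have : y - x = (-1 : ℝ) • (x - y) := by module
  rw [this, pNorm_smul hP]; norm_num

lemma proj_varineq {Γ : Set (Fin p → ℝ)} (hconv : Convex ℝ Γ) (hP : P.PosDef)
    {Pr : (Fin p → ℝ) → (Fin p → ℝ)} (hPr : IsMetricProj P Γ Pr)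
    (x : Fin p → ℝ) {ν : Fin p → ℝ} (hν : ν ∈ Γ) :
    pInner P (x - Pr x) (ν - Pr x) ≤ 0 := by
  set u := Pr x with hu
  set s := pInner P (x - u) (ν - u) with hs
  set d := pInner P (ν - u) (ν - u) with hd
  have hd0 : 0 ≤ d := pInner_self_nonneg hP _
  -- for all t ∈ (0,1], 2 t s ≤ t^2 d
  have key : ∀ t : ℝ, 0 < t → t ≤ 1 → 2 * t * s ≤ t ^ 2 * d := by
    intro t ht0 ht1
    have hz : u + t • (ν - u) ∈ Γ := by
      have := hconv (hPr x).1 hν (by linarith : (0:ℝ) ≤ 1 - t) ht0.le (by ring)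
      convert this using 1
      module
    have h1 : pNorm P (x - u) ≤ pNorm P (x - (u + t • (ν - u))) := (hPr x).2 _ hz
    have h2 : pInner P (x - u) (x - u) ≤ pInner P (x - (u + t • (ν - u))) (x - (u + t • (ν - u))) := by
      have := pow_le_pow_left₀ (pNorm_nonneg (P := P) (x - u)) h1 2
      rwa [pNorm_sq hP, pNorm_sq hP] at this
    have hexp : pInner P (x - (u + t • (ν - u))) (x - (u + t • (ν - u)))
        = pInner P (x - u) (x - u) - 2 * t * s + t ^ 2 * d := by
      have hxy : x - (u + t • (ν - u)) = (x - u) - t • (ν - u) := by module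
      simp only [hxy, hs, hd, pInner_sub_left, pInner_sub_right, pInner_smul_left,
        pInner_smul_right, pInner_comm hP ν x, pInner_comm hP u x, pInner_comm hP u ν]
      ring
    rw [hexp] at h2
    linarith
  by_contra hpos
  push_neg at hpos
  rcases eq_or_lt_of_le hd0 with hd' | hd'
  · have := key 1 one_pos le_rfl
    rw [← hd'] at this
    nlinarith
  · have ht : 0 < min 1 (s / d) := lt_min one_pos (div_pos hpos hd')
    have := key _ ht (min_le_left _ _)
    have htd : min 1 (s / d) * d ≤ s := by
      have := min_le_right 1 (s / d)
      calc min 1 (s / d) * d ≤ (s / d) * d := by nlinarith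
        _ = s := by field_simp
    nlinarith

lemma proj_nonexpansive {Γ : Set (Fin p → ℝ)} (hconv : Convex ℝ Γ) (hP : P.PosDef)
    {Pr : (Fin p → ℝ) → (Fin p → ℝ)} (hPr : IsMetricProj P Γ Pr) (x y : Fin p → ℝ) :
    pNorm P (Pr x - Pr y) ≤ pNorm P (x - y) := by
  set u := Pr x
  set v := Pr y
  have h1 : pInner P (x - u) (v - u) ≤ 0 := proj_varineq hconv hP hPr x (hPr y).1
  have h2 : pInner P (y - v) (u - v) ≤ 0 := proj_varineq hconv hP hPr y (hPr x).1
  have hkey : pInner P (u - v) (u - v) ≤ pInner P (x - y) (u - v) := by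
    have he : pInner P (x - y) (u - v) - pInner P (u - v) (u - v)
        = - pInner P (x - u) (v - u) - pInner P (y - v) (u - v) := by
      have e1 : x - y = ((x - u) - (y - v)) + (u - v) := by module
      rw [e1, pInner_add_left, pInner_sub_left]
      have e2 : v - u = (-1 : ℝ) • (u - v) := by module
      rw [e2, pInner_smul_right]
      ring
    linarith
  have hcs : pInner P (x - y) (u - v) ≤ pNorm P (x - y) * pNorm P (u - v) :=
    pInner_cs hP _ _
  have hsq : pNorm P (u - v) ^ 2 ≤ pNorm P (x - y) * pNorm P (u - v) := by
    rw [pNorm_sq hP]; linarith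
  rcases eq_or_lt_of_le (pNorm_nonneg (P := P) (u - v)) with h | h
  · rw [← h]; exact pNorm_nonneg _
  · nlinarith

theorem stmt19 {p n : ℕ} (Γ : Set (Fin p → ℝ)) (hne : Γ.Nonempty) (hcl : IsClosed Γ)
    (hconv : Convex ℝ Γ) (P : Matrix (Fin p) (Fin p) ℝ) (hP : P.PosDef)
    (F : (Fin p → ℝ) → (Fin p → ℝ)) (α : ℝ) (hα : 0 < α)
    (Pr : (Fin p → ℝ) → (Fin p → ℝ)) (hPr : IsMetricProj P Γ Pr)
    (l : ℝ) (hl0 : 0 < l) (hl1 : l < 1)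
    (cdfb : ℝ) (hc0 : 0 < cdfb) (hc1 : cdfb < 1)
    (hcontr : ∀ η ∈ Γ, ∀ η' ∈ Γ,
      pNorm P (((1 - l) • η + l • Pr (η - α • F η)) - ((1 - l) • η' + l • Pr (η' - α • F η'))) ≤
        cdfb * pNorm P (η - η'))
    (ηb : Fin p → ℝ) (hηb : ηb ∈ Γ)
    (hfix : (1 - l) • ηb + l • Pr (ηb - α • F ηb) = ηb)
    (ηk ek : Fin p → ℝ) (hηk : ηk ∈ Γ)
    (ξk : Fin n → ℝ) (Lh : ℝ) (hLh : 0 < Lh)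
    (hbound : pNorm P (ek - F ηk) ≤ Lh * Real.sqrt (ξk ⬝ᵥ ξk)) :
    pNorm P (((1 - l) • ηk + l • Pr (ηk - α • ek)) - ηb) ≤
      cdfb * pNorm P (ηk - ηb) + l * α * Lh * Real.sqrt (ξk ⬝ᵥ ξk) := by
  set A := (1 - l) • ηk + l • Pr (ηk - α • F ηk) with hA
  set B := (1 - l) • ηk + l • Pr (ηk - α • ek) with hB
  have hdecomp : B - ηb = (A - ηb) + l • (Pr (ηk - α • ek) - Pr (ηk - α • F ηk)) := by
    rw [hA, hB]; module
  have htri : pNorm P (B - ηb) ≤ pNorm P (A - ηb) +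
      pNorm P (l • (Pr (ηk - α • ek) - Pr (ηk - α • F ηk))) := by
    rw [hdecomp]; exact pNorm_triangle hP _ _
  have hAb : pNorm P (A - ηb) ≤ cdfb * pNorm P (ηk - ηb) := by
    have := hcontr ηk hηk ηb hηb
    rwa [hfix] at this
  have hproj : pNorm P (l • (Pr (ηk - α • ek) - Pr (ηk - α • F ηk)))
      ≤ l * α * Lh * Real.sqrt (ξk ⬝ᵥ ξk) := by
    rw [pNorm_smul hP, abs_of_pos hl0]
    have h1 : pNorm P (Pr (ηk - α • ek) - Pr (ηk - α • F ηk))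
        ≤ pNorm P ((ηk - α • ek) - (ηk - α • F ηk)) :=
      proj_nonexpansive hconv hP hPr _ _
    have h2 : (ηk - α • ek) - (ηk - α • F ηk) = α • (F ηk - ek) := by module
    rw [h2, pNorm_smul hP, abs_of_pos hα, pNorm_sub_comm hP (F ηk) ek] at h1
    calc l * pNorm P (Pr (ηk - α • ek) - Pr (ηk - α • F ηk))
        ≤ l * (α * pNorm P (ek - F ηk)) := by gcongr
      _ ≤ l * (α * (Lh * Real.sqrt (ξk ⬝ᵥ ξk))) := by gcongr
      _ = l * α * Lh * Real.sqrt (ξk ⬝ᵥ ξk) := by ring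
  linarith
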